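/- Let 𝒳 = (M, X, ⊥) be a concurrent system and α a state. The following are equivalent: (i) M_α is finite; (ii) there is no infinite execution from α, i.e., there is no strictly increasing infinite chain in (M_α, ≤); (iii) the generating series Σ_{x ∈ M_α} z^{|x|} is a polynomial (has infinite radius of convergence). -/

import Mathlib

namespace TraceDoc

/-- The elementary commutation relation on the free monoid induced by an
independence relation `I`. -/
def traceRel {S : Type*} (I : S → S → Prop) : FreeMonoid S → FreeMonoid S → Prop :=
  fun u v => ∃ a b, I a b ∧ u = FreeMonoid.of a * FreeMonoid.of b ∧
    v = FreeMonoid.of b * FreeMonoid.of a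

/-- The congruence on the free monoid generated by the commutations of `I`. -/
def traceCon {S : Type*} (I : S → S → Prop) : Con (FreeMonoid S) := conGen (traceRel I)

/-- The trace monoid `M(Σ, I)`. -/
abbrev TraceMonoid {S : Type*} (I : S → S → Prop) := (traceCon I).Quotient

/-- Canonical projection from words to traces. -/
def tproj {S : Type*} (I : S → S → Prop) : FreeMonoid S →* TraceMonoid I := (traceCon I).mk'

/-- Image of a letter in the trace monoid. -/
def temb {S : Type*} (I : S → S → Prop) (a : S) : TraceMonoid I := tproj I (FreeMonoid.of a)

/-- Any monoid hom to a commutative monoid factors through the trace congruence. -/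
lemma traceCon_le_ker {S N : Type*} [CommMonoid N] (I : S → S → Prop)
    (f : FreeMonoid S →* N) : traceCon I ≤ Con.ker f := by
  refine Con.conGen_le.2 (fun u v h => ?_ : ∀ u v, traceRel I u v → Con.ker f u v)
  obtain ⟨a, b, _, rfl, rfl⟩ := h
  simp [Con.ker_rel, map_mul, mul_comm]

/-- Length of a trace (well defined since commutations preserve length). -/
def tlen {S : Type*} (I : S → S → Prop) : TraceMonoid I → ℕ := fun x =>
  Multiplicative.toAdd
    (Con.lift _ (FreeMonoid.lift fun _ : S => Multiplicative.ofAdd (1 : ℕ))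
      (traceCon_le_ker I _) x)

/-- Number of occurrences of the letter `a` in a trace (well defined). -/
def tcount {S : Type*} [DecidableEq S] (I : S → S → Prop) (a : S) : TraceMonoid I → ℕ := fun x =>
  Multiplicative.toAdd
    (Con.lift _ (FreeMonoid.lift fun b : S =>
        Multiplicative.ofAdd (if b = a then (1 : ℕ) else 0))
      (traceCon_le_ker I _) x)

/-- Left divisibility in a trace monoid. -/
def tle {S : Type*} (I : S → S → Prop) (x y : TraceMonoid I) : Prop := ∃ z, y = x * z

/-- A clique: a finite set of pairwise independent letters. -/
def IsClique {S : Type*} (I : S → S → Prop) (s : Finset S) : Prop := (↑s : Set S).Pairwise I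

/-- The type of cliques of the trace monoid. -/
abbrev Clique {S : Type*} (I : S → S → Prop) := {s : Finset S // IsClique I s}

lemma temb_commute {S : Type*} {I : S → S → Prop} {a b : S} (h : I a b) :
    Commute (temb I a) (temb I b) := by
  have : (traceCon I) (FreeMonoid.of a * FreeMonoid.of b) (FreeMonoid.of b * FreeMonoid.of a) :=
    ConGen.Rel.of _ _ ⟨a, b, h, rfl, rfl⟩
  simpa [Commute, SemiconjBy, temb, tproj, ← map_mul] using (traceCon I).eq.2 this

/-- The product of a clique in the trace monoid. -/
def cprod {S : Type*} (I : S → S → Prop) (c : Clique I) : TraceMonoid I :=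
  c.1.noncommProd (temb I) (fun a ha b hb hab => temb_commute (c.2 ha hb hab))

/-- The Cartier–Foata normality relation `c → d` between cliques. -/
def NormalPair {S : Type*} (I : S → S → Prop) (c d : Clique I) : Prop :=
  ∀ b ∈ d.1, ∃ a ∈ c.1, ¬ I a b

/-- A concurrent system: a right action of the trace monoid on the states
`X` together with a sink `⊥` (modelled by `none`). -/
structure ConcurrentSystem {S : Type*} (I : S → S → Prop) (X : Type*) where
  act : Option X → TraceMonoid I → Option X
  act_one : ∀ α, act α 1 = α
  act_mul : ∀ α x y, act α (x * y) = act (act α x) y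
  act_bot : ∀ x, act none x = none

/-- The set `M_α` of executions from state `α`. -/
def ConcurrentSystem.execs {S : Type*} {I : S → S → Prop} {X : Type*}
    (C : ConcurrentSystem I X) (α : X) : Set (TraceMonoid I) :=
  {x | C.act (some α) x ≠ none}

end TraceDoc

section Aux
open TraceDoc
variable {S : Type*} (I : S → S → Prop)

lemma tlen_mul (x y : TraceMonoid I) : tlen I (x * y) = tlen I x + tlen I y := by
  unfold tlen; rw [map_mul]; rfl

lemma tlen_tproj (w : FreeMonoid S) : tlen I (tproj I w) = w.length := by
  unfold tlen tproj
  rw [Con.lift_mk']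
  induction w using FreeMonoid.recOn with
  | one => simp
  | of_mul a w ih =>
    rw [map_mul, FreeMonoid.length_mul, FreeMonoid.length_of]
    simp only [toAdd_mul, FreeMonoid.lift_eval_of] at *
    simp [ih]

lemma tproj_surjective : Function.Surjective (tproj I) := Con.mk'_surjective

lemma tlen_one : tlen I (1 : TraceMonoid I) = 0 := by
  simpa using tlen_tproj I 1

lemma tlen_pow (x : TraceMonoid I) (n : ℕ) : tlen I (x ^ n) = n * tlen I x := by
  induction n with
  | zero => simpa using tlen_one I
  | succ n ih => rw [pow_succ, tlen_mul, ih]; ring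

lemma tlen_eq_zero {x : TraceMonoid I} (h : tlen I x = 0) : x = 1 := by
  obtain ⟨w, rfl⟩ := tproj_surjective I x
  rw [tlen_tproj] at h
  rw [FreeMonoid.length_eq_zero] at h
  rw [h, map_one]

lemma finite_tlen_le [Finite S] (n : ℕ) : {x : TraceMonoid I | tlen I x ≤ n}.Finite := by
  apply Set.Finite.subset
    ((List.finite_length_le S n).image (fun l => tproj I (FreeMonoid.ofList l)))
  rintro x hx
  obtain ⟨w, rfl⟩ := tproj_surjective I x
  refine ⟨w.toList, ?_, by simp [FreeMonoid.ofList_toList]⟩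
  have := tlen_tproj I w
  simp only [Set.mem_setOf_eq] at hx
  rw [this] at hx
  exact hx

/-- The pumping lemma: if `M_α` is infinite, some execution can be extended by a
nonempty loop. -/
lemma exists_pump {X : Type*} [Finite S] [Fintype X] (C : ConcurrentSystem I X) (α : X)
    (hinf : ¬ (C.execs α).Finite) :
    ∃ x z : TraceMonoid I, z ≠ 1 ∧ x ∈ C.execs α ∧
      ∀ n, C.act (some α) (x * z ^ n) = C.act (some α) x := by
  classical
  set N := Fintype.card X with hN
  obtain ⟨x, hx, hlen⟩ : ∃ x ∈ C.execs α, ¬ tlen I x ≤ N := by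
    by_contra h
    push_neg at h
    exact hinf ((finite_tlen_le I N).subset (fun x hx => h x hx))
  obtain ⟨w, rfl⟩ := tproj_surjective I x
  set l := w.toList with hl
  have hlN : N ≤ l.length := by
    have := tlen_tproj I w
    simp only [this] at hlen
    have hll : w.length = l.length := rfl
    omega
  set p : ℕ → TraceMonoid I := fun k => tproj I (FreeMonoid.ofList (l.take k)) with hp
  have hdecomp : ∀ k, tproj I w = p k * tproj I (FreeMonoid.ofList (l.drop k)) := by
    intro k
    rw [hp, ← map_mul, ← FreeMonoid.ofList_append, List.take_append_drop]
    rfl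
  have hpexec : ∀ k, C.act (some α) (p k) ≠ none := by
    intro k h
    apply hx
    rw [hdecomp k, C.act_mul, h, C.act_bot]
  have hsome : ∀ k, (C.act (some α) (p k)).isSome := fun k =>
    Option.isSome_iff_ne_none.2 (hpexec k)
  obtain ⟨i, j, hij, hjN, hact⟩ : ∃ i j : ℕ, i < j ∧ j ≤ N ∧
      C.act (some α) (p i) = C.act (some α) (p j) := by
    obtain ⟨i, j, hne, hg⟩ := Fintype.exists_ne_map_eq_of_card_lt
      (fun k : Fin (N + 1) => (C.act (some α) (p k)).get (hsome k))
      (by simp [hN])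
    have heq : C.act (some α) (p i) = C.act (some α) (p j) := by
      rw [← Option.some_get (hsome i), ← Option.some_get (hsome j), hg]
    rcases lt_or_gt_of_ne (fun h : (i : ℕ) = j => hne (Fin.ext h)) with h | h
    · exact ⟨i, j, h, by omega, heq⟩
    · exact ⟨j, i, h, by omega, heq.symm⟩
  set z : TraceMonoid I := tproj I (FreeMonoid.ofList ((l.take j).drop i)) with hzdef
  have hlist : l.take j = l.take i ++ (l.take j).drop i := by
    conv_lhs => rw [← List.take_append_drop i (l.take j)]
    rw [List.take_take, min_eq_left hij.le]
  have hsplit : p j = p i * z := by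
    show tproj I (FreeMonoid.ofList (l.take j)) =
      tproj I (FreeMonoid.ofList (l.take i)) * tproj I (FreeMonoid.ofList ((l.take j).drop i))
    rw [← map_mul, ← FreeMonoid.ofList_append, ← hlist]
  have hzlen : tlen I z = j - i := by
    rw [hzdef, tlen_tproj]
    show ((l.take j).drop i).length = j - i
    rw [List.length_drop, List.length_take]
    omega
  have hzne : z ≠ 1 := by
    intro h
    rw [h, tlen_one] at hzlen
    omega
  have hstep : C.act (some α) (p i * z) = C.act (some α) (p i) := by
    rw [← hsplit]; exact hact.symm
  refine ⟨p i, z, hzne, hpexec i, ?_⟩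
  intro n
  induction n with
  | zero => simp
  | succ n ih =>
    rw [pow_succ, ← mul_assoc, C.act_mul, ih, ← C.act_mul, hstep]
end Aux
open TraceDoc in
/-- For a state `α` of a concurrent system, finiteness of `M_α`, absence of
infinite strictly increasing chains of executions, and polynomiality of the
generating series of `M_α` are all equivalent. -/
theorem stmt15 {S X : Type*} [Fintype S] [Fintype X]
    (I : S → S → Prop) (hsym : Symmetric I) (hirr : ∀ a, ¬ I a a)
    (C : ConcurrentSystem I X) (α : X) :
    ((C.execs α).Finite ↔
      ¬ ∃ f : ℕ → TraceMonoid I, (∀ n, f n ∈ C.execs α) ∧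
        ∀ n, tle I (f n) (f (n + 1)) ∧ f n ≠ f (n + 1)) ∧
    ((C.execs α).Finite ↔
      ∃ P : Polynomial ℚ,
        (PowerSeries.mk fun n =>
          (Nat.card {x : TraceMonoid I // x ∈ C.execs α ∧ tlen I x = n} : ℚ)) =
        (P : PowerSeries ℚ)) := by
  classical
  have key : ¬ (C.execs α).Finite → ∃ x z : TraceMonoid I, z ≠ 1 ∧ x ∈ C.execs α ∧
      ∀ n, C.act (some α) (x * z ^ n) = C.act (some α) x := exists_pump I C α
  have fwd : (C.execs α).Finite → ¬ ∃ f : ℕ → TraceMonoid I, (∀ n, f n ∈ C.execs α) ∧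
      ∀ n, tle I (f n) (f (n + 1)) ∧ f n ≠ f (n + 1) := by
    intro hfin
    rintro ⟨f, hmem, hchain⟩
    have hmono : ∀ n, tlen I (f n) < tlen I (f (n + 1)) := by
      intro n
      obtain ⟨⟨z, hz⟩, hne⟩ := hchain n
      have hz1 : z ≠ 1 := by rintro rfl; exact hne (by simp [hz])
      have hzpos : tlen I z ≠ 0 := fun h => hz1 (tlen_eq_zero I h)
      rw [hz, tlen_mul]
      omega
    have hinj : Function.Injective f := by
      intro a b h
      exact (strictMono_nat_of_lt_succ hmono).injective (congrArg (tlen I) h)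
    exact Set.infinite_of_injective_forall_mem hinj hmem hfin
  have bwd : ¬ (C.execs α).Finite → ∃ f : ℕ → TraceMonoid I, (∀ n, f n ∈ C.execs α) ∧
      ∀ n, tle I (f n) (f (n + 1)) ∧ f n ≠ f (n + 1) := by
    intro hinf
    obtain ⟨x, z, hz, hxmem, hact⟩ := key hinf
    refine ⟨fun n => x * z ^ n, ?_, ?_⟩
    · intro n
      show C.act (some α) (x * z ^ n) ≠ none
      rw [hact n]; exact hxmem
    · intro n
      constructor
      · exact ⟨z, by rw [mul_assoc, ← pow_succ]⟩
      · intro h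
        have := congrArg (tlen I) h
        have hzpos : tlen I z ≠ 0 := fun h0 => hz (tlen_eq_zero I h0)
        rw [tlen_mul, tlen_mul, tlen_pow, tlen_pow, Nat.succ_mul] at this
        omega
  refine ⟨⟨fwd, fun h => by by_contra hinf; exact h (bwd hinf)⟩, ?_, ?_⟩
  · intro hfin
    obtain ⟨N, hNbd⟩ : ∃ N, ∀ x ∈ C.execs α, tlen I x ≤ N := by
      obtain ⟨N, hN⟩ := (hfin.image (tlen I)).bddAbove
      exact ⟨N, fun x hx => hN ⟨x, hx, rfl⟩⟩
    set a : ℕ → ℚ := fun n =>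
      (Nat.card {x : TraceMonoid I // x ∈ C.execs α ∧ tlen I x = n} : ℚ) with ha
    have hzero : ∀ n, N < n → a n = 0 := by
      intro n hn
      have : IsEmpty {x : TraceMonoid I // x ∈ C.execs α ∧ tlen I x = n} := by
        constructor
        rintro ⟨x, hx, hl⟩
        have := hNbd x hx
        omega
      simp [ha, Nat.card_of_isEmpty]
    refine ⟨∑ n ∈ Finset.range (N + 1), Polynomial.C (a n) * Polynomial.X ^ n, ?_⟩
    ext n
    rw [PowerSeries.coeff_mk, Polynomial.coeff_coe, Polynomial.finset_sum_coeff]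
    simp only [Polynomial.coeff_C_mul, Polynomial.coeff_X_pow, mul_ite, mul_one, mul_zero]
    rw [Finset.sum_ite_eq]
    by_cases h : n ∈ Finset.range (N + 1)
    · simp [h]
    · simp only [h, if_false]
      exact hzero n (by simp only [Finset.mem_range] at h; omega)
  · rintro hyp
    by_contra hinf
    obtain ⟨P, hP⟩ := hyp
    obtain ⟨x, z, hz, hxmem, hact⟩ := key hinf
    have hzpos : 1 ≤ tlen I z := by
      have : tlen I z ≠ 0 := fun h0 => hz (tlen_eq_zero I h0)
      omega
    set m := P.natDegree + 1 with hm
    set K := tlen I x + m * tlen I z with hK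
    have hKbig : P.natDegree < K := by
      have : m ≤ m * tlen I z := Nat.le_mul_of_pos_right m (by omega)
      omega
    have hcoeff : (Nat.card {y : TraceMonoid I // y ∈ C.execs α ∧ tlen I y = K} : ℚ)
        = P.coeff K := by
      have := congrArg (fun F => PowerSeries.coeff K F) hP
      simpa [PowerSeries.coeff_mk, Polynomial.coeff_coe] using this
    have hmemK : x * z ^ m ∈ C.execs α ∧ tlen I (x * z ^ m) = K := by
      refine ⟨?_, by rw [tlen_mul, tlen_pow, hK]⟩
      show C.act (some α) (x * z ^ m) ≠ none
      rw [hact m]; exact hxmem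
    haveI hfinK : Finite {y : TraceMonoid I // y ∈ C.execs α ∧ tlen I y = K} := by
      have hsub : {y : TraceMonoid I | y ∈ C.execs α ∧ tlen I y = K} ⊆
          {y : TraceMonoid I | tlen I y ≤ K} := fun y hy => le_of_eq hy.2
      exact ((finite_tlen_le I K).subset hsub).to_subtype
    haveI : Nonempty {y : TraceMonoid I // y ∈ C.execs α ∧ tlen I y = K} :=
      ⟨⟨x * z ^ m, hmemK⟩⟩
    have hpos : 0 < Nat.card {y : TraceMonoid I // y ∈ C.execs α ∧ tlen I y = K} :=
      Nat.card_pos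
    rw [Polynomial.coeff_eq_zero_of_natDegree_lt hKbig] at hcoeff
    have hQ : (0 : ℚ) < Nat.card {y : TraceMonoid I // y ∈ C.execs α ∧ tlen I y = K} := by
      exact_mod_cast hpos
    exact ne_of_gt hQ hcoeff
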